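/- Let 𝒞 be a small category with pairwise coproducts and k a commutative ring. If 𝓕 : 𝒞 → Mod(k) is a split monoadditive representation, then Σ𝓕 is again a split monoadditive representation. Consequently, every split monoadditive representation is ∞-monoadditive. -/

import Mathlib

open CategoryTheory CategoryTheory.Limits

namespace Stmt9

variable {k : Type} [CommRing k] {C : Type} [SmallCategory C] [HasBinaryCoproducts C]

/-- The functor `sq : 𝒞 ⥤ 𝒞`, `c ↦ c ⊔ c`. -/
@[simps]
noncomputable def sq : C ⥤ C where
  obj c := c ⨿ c
  map f := coprod.map f f

/-- The coproduct bifunctor `𝒞 × 𝒞 ⥤ 𝒞`, `(c₁, c₂) ↦ c₁ ⊔ c₂`. -/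
@[simps]
noncomputable def coprodF : C × C ⥤ C where
  obj p := p.1 ⨿ p.2
  map f := coprod.map f.1 f.2

/-- The bifunctor `(c₁, c₂) ↦ 𝓕(c₁) ⊕ 𝓕(c₂)`. -/
noncomputable def biSum (F : C ⥤ ModuleCat.{0} k) : C × C ⥤ ModuleCat.{0} k :=
  (CategoryTheory.Prod.fst C C ⋙ F) ⊞ (CategoryTheory.Prod.snd C C ⋙ F)

/-- The first component `𝓕(c₁) ⟶ 𝓕(c₁ ⊔ c₂)` of the canonical natural transformation. -/
@[simps]
noncomputable def canNatFst (F : C ⥤ ModuleCat.{0} k) :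
    (CategoryTheory.Prod.fst C C ⋙ F) ⟶ coprodF ⋙ F where
  app p := F.map coprod.inl
  naturality p q f := by
    change F.map f.1 ≫ F.map coprod.inl = F.map coprod.inl ≫ F.map (coprod.map f.1 f.2)
    rw [← F.map_comp, ← F.map_comp]
    congr 1
    simp

/-- The second component `𝓕(c₂) ⟶ 𝓕(c₁ ⊔ c₂)` of the canonical natural transformation. -/
@[simps]
noncomputable def canNatSnd (F : C ⥤ ModuleCat.{0} k) :
    (CategoryTheory.Prod.snd C C ⋙ F) ⟶ coprodF ⋙ F where
  app p := F.map coprod.inr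
  naturality p q f := by
    change F.map f.2 ≫ F.map coprod.inr = F.map coprod.inr ≫ F.map (coprod.map f.1 f.2)
    rw [← F.map_comp, ← F.map_comp]
    congr 1
    simp

/-- The canonical natural transformation of bifunctors
`(𝓕(i₁), 𝓕(i₂)) : 𝓕(c₁) ⊕ 𝓕(c₂) ⟶ 𝓕(c₁ ⊔ c₂)` induced by the coproduct coprojections. -/
noncomputable def canNat (F : C ⥤ ModuleCat.{0} k) : biSum F ⟶ coprodF ⋙ F :=
  biprod.desc (canNatFst F) (canNatSnd F)

/-- A representation `𝓕` is split monoadditive if the canonical natural transformation of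
bifunctors `𝓕(c₁) ⊕ 𝓕(c₂) ⟶ 𝓕(c₁ ⊔ c₂)` admits a natural retraction. -/
def SplitMonoadditive (F : C ⥤ ModuleCat.{0} k) : Prop :=
  ∃ r : (coprodF ⋙ F) ⟶ biSum F, canNat F ≫ r = 𝟙 (biSum F)

/-- The canonical map `𝓕(c₁) ⊕ 𝓕(c₂) ⟶ 𝓕(c₁ ⊔ c₂)` at a single pair of objects. -/
noncomputable def canMap (F : C ⥤ ModuleCat.{0} k) (c₁ c₂ : C) :
    F.obj c₁ ⊞ F.obj c₂ ⟶ F.obj (c₁ ⨿ c₂) :=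
  biprod.desc (F.map coprod.inl) (F.map coprod.inr)

/-- Monoadditivity: all canonical maps are monomorphisms. -/
def Monoadditive (F : C ⥤ ModuleCat.{0} k) : Prop :=
  ∀ c₁ c₂ : C, Mono (canMap F c₁ c₂)

/-- The natural transformation `T_𝓕 : 𝓕 ⊕ 𝓕 ⟶ 𝓕 ∘ sq`. -/
noncomputable def TF (F : C ⥤ ModuleCat.{0} k) : F ⊞ F ⟶ sq ⋙ F :=
  biprod.desc (F.leftUnitor.inv ≫ Functor.whiskerRight ⟨fun c => coprod.inl, by intro X Y f; exact (coprod.inl_map f f).symm⟩ F)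
    (F.leftUnitor.inv ≫ Functor.whiskerRight ⟨fun c => coprod.inr, by intro X Y f; exact (coprod.inr_map f f).symm⟩ F)

/-- `Σ𝓕 = coker(T_𝓕)`. -/
noncomputable def SigmaF (F : C ⥤ ModuleCat.{0} k) : C ⥤ ModuleCat.{0} k :=
  cokernel (TF F)

/-- `n`-monoadditivity. -/
def NMonoadditive : ℕ → (C ⥤ ModuleCat.{0} k) → Prop
  | 0, _ => True
  | n + 1, F => Monoadditive F ∧ NMonoadditive n (SigmaF F)

end Stmt9

/-!
Split monoadditivity of `𝓕` amounts to a natural projection `p : 𝓕(c₁ ⊔ c₂) ⟶ 𝓕(c₁)` with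
`p ∘ 𝓕(i₁) = id` and `p ∘ 𝓕(i₂) = 0`: the projection onto `𝓕(c₂)` is `p` precomposed with the
swap of `c₁ ⊔ c₂`. For `Σ𝓕` such a projection is induced by
`𝓕((c₁ ⊔ c₂) ⊔ (c₁ ⊔ c₂)) ⟶ 𝓕((c₁ ⊔ c₁) ⊔ (c₂ ⊔ c₂)) ⟶ 𝓕(c₁ ⊔ c₁) ⟶ Σ𝓕(c₁)`, where the first map
interchanges the middle summands and the second is `p`; by naturality of `p` it kills the image
of `T_𝓕`. Since split monoadditive functors are monoadditive, iterating gives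
`∞`-monoadditivity.
-/

lemma CategoryTheory.Limits.biprod.desc_comp_lift_eq_id {V : Type*} [Category V]
    [HasZeroMorphisms V] {X Y Z : V} [HasBinaryBiproduct X Y] {f : X ⟶ Z} {g : Y ⟶ Z}
    {p : Z ⟶ X} {q : Z ⟶ Y} (hfp : f ≫ p = 𝟙 X) (hgp : g ≫ p = 0) (hfq : f ≫ q = 0)
    (hgq : g ≫ q = 𝟙 Y) :
    biprod.desc f g ≫ biprod.lift p q = 𝟙 (X ⊞ Y) := by
  ext <;> simp [hfp, hgp, hfq, hgq]

namespace Stmt9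

variable {k : Type} [CommRing k] {C : Type} [SmallCategory C] [HasBinaryCoproducts C]

noncomputable def coprodInterchange (c₁ c₂ : C) :
    (c₁ ⨿ c₂) ⨿ (c₁ ⨿ c₂) ⟶ (c₁ ⨿ c₁) ⨿ (c₂ ⨿ c₂) :=
  coprod.desc (coprod.map coprod.inl coprod.inl) (coprod.map coprod.inr coprod.inr)

lemma inl_coprodInterchange (c₁ c₂ : C) :
    coprod.inl ≫ coprodInterchange c₁ c₂ = coprod.map coprod.inl coprod.inl :=
  coprod.inl_desc _ _

lemma inr_coprodInterchange (c₁ c₂ : C) :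
    coprod.inr ≫ coprodInterchange c₁ c₂ = coprod.map coprod.inr coprod.inr :=
  coprod.inr_desc _ _

lemma coprod_map_inl_inl_coprodInterchange (c₁ c₂ : C) :
    coprod.map coprod.inl coprod.inl ≫ coprodInterchange c₁ c₂ = coprod.inl := by
  ext <;> simp only [coprodInterchange, coprod.map_desc, coprod.inl_desc, coprod.inr_desc,
    coprod.inl_map]

lemma coprod_map_inr_inr_coprodInterchange (c₁ c₂ : C) :
    coprod.map coprod.inr coprod.inr ≫ coprodInterchange c₁ c₂ = coprod.inr := by
  ext <;> simp only [coprodInterchange, coprod.map_desc, coprod.inl_desc, coprod.inr_desc,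
    coprod.inr_map]

lemma coprodInterchange_naturality {c₁ c₂ d₁ d₂ : C} (f₁ : c₁ ⟶ d₁) (f₂ : c₂ ⟶ d₂) :
    coprod.map (coprod.map f₁ f₂) (coprod.map f₁ f₂) ≫ coprodInterchange d₁ d₂ =
      coprodInterchange c₁ c₂ ≫ coprod.map (coprod.map f₁ f₁) (coprod.map f₂ f₂) := by
  ext <;> simp [coprodInterchange]

section Sigma

variable (F : C ⥤ ModuleCat.{0} k)

noncomputable def sigmaπ (c : C) : F.obj (c ⨿ c) ⟶ (SigmaF F).obj c :=
  (cokernel.π (TF F)).app c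

lemma TF_app_eq (c : C) : (TF F).app c = (biprod.fst : F ⊞ F ⟶ F).app c ≫ F.map coprod.inl +
    (biprod.snd : F ⊞ F ⟶ F).app c ≫ F.map coprod.inr := by
  rw [TF, biprod.desc_eq]
  rfl

lemma TF_app_comp_eq_zero {c : C} {X : ModuleCat.{0} k} {g : F.obj (c ⨿ c) ⟶ X}
    (hl : F.map coprod.inl ≫ g = 0) (hr : F.map coprod.inr ≫ g = 0) : (TF F).app c ≫ g = 0 :=
  calc (TF F).app c ≫ g
      = ((biprod.fst : F ⊞ F ⟶ F).app c ≫ F.map coprod.inl +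
          (biprod.snd : F ⊞ F ⟶ F).app c ≫ F.map coprod.inr) ≫ g :=
        congrArg (· ≫ g) (TF_app_eq F c)
    _ = 0 := by simp only [Preadditive.add_comp, Category.assoc, hl, hr, comp_zero, add_zero]

lemma TF_app_comp_sigmaπ (c : C) : (TF F).app c ≫ sigmaπ F c = 0 :=
  NatTrans.congr_app (cokernel.condition (TF F)) c

lemma map_inl_comp_sigmaπ (c : C) : F.map coprod.inl ≫ sigmaπ F c = 0 := by
  have inl_TF : ((biprod.inl : F ⟶ F ⊞ F) ≫ TF F).app c = F.map coprod.inl := by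
    rw [TF, biprod.inl_desc]
    exact Category.id_comp _
  rw [← inl_TF]
  exact NatTrans.congr_app (show (biprod.inl ≫ TF F) ≫ cokernel.π (TF F) = 0 by simp) c

lemma map_inr_comp_sigmaπ (c : C) : F.map coprod.inr ≫ sigmaπ F c = 0 := by
  have inr_TF : ((biprod.inr : F ⟶ F ⊞ F) ≫ TF F).app c = F.map coprod.inr := by
    rw [TF, biprod.inr_desc]
    exact Category.id_comp _
  rw [← inr_TF]
  exact NatTrans.congr_app (show (biprod.inr ≫ TF F) ≫ cokernel.π (TF F) = 0 by simp) c

lemma sigmaπ_naturality {c d : C} (f : c ⟶ d) :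
    F.map (coprod.map f f) ≫ sigmaπ F d = sigmaπ F c ≫ (SigmaF F).map f :=
  (cokernel.π (TF F)).naturality f

noncomputable def sigmaIsCokernel (c : C) :
    IsColimit (CokernelCofork.ofπ (f := (TF F).app c) (sigmaπ F c) (TF_app_comp_sigmaπ F c)) :=
  (CokernelCofork.isColimitMapCoconeEquiv _ _).1
    (isColimitOfPreserves ((evaluation C _).obj c) (cokernelIsCokernel (TF F)))

instance (c : C) : Epi (sigmaπ F c) :=
  epi_of_isColimit_cofork (sigmaIsCokernel F c)

noncomputable def sigmaDesc {c : C} {X : ModuleCat.{0} k} (g : F.obj (c ⨿ c) ⟶ X)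
    (hl : F.map coprod.inl ≫ g = 0) (hr : F.map coprod.inr ≫ g = 0) : (SigmaF F).obj c ⟶ X :=
  (sigmaIsCokernel F c).desc (CokernelCofork.ofπ g (TF_app_comp_eq_zero F hl hr))

lemma sigmaπ_comp_sigmaDesc {c : C} {X : ModuleCat.{0} k} (g : F.obj (c ⨿ c) ⟶ X)
    (hl : F.map coprod.inl ≫ g = 0) (hr : F.map coprod.inr ≫ g = 0) :
    sigmaπ F c ≫ sigmaDesc F g hl hr = g :=
  (sigmaIsCokernel F c).fac _ WalkingParallelPair.one

end Sigma

structure FstRetraction (F : C ⥤ ModuleCat.{0} k) where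
  app : ∀ c₁ c₂ : C, F.obj (c₁ ⨿ c₂) ⟶ F.obj c₁
  naturality : ∀ {c₁ c₂ d₁ d₂ : C} (f₁ : c₁ ⟶ d₁) (f₂ : c₂ ⟶ d₂),
    F.map (coprod.map f₁ f₂) ≫ app d₁ d₂ = app c₁ c₂ ≫ F.map f₁
  map_inl_comp : ∀ c₁ c₂ : C, F.map coprod.inl ≫ app c₁ c₂ = 𝟙 _
  map_inr_comp : ∀ c₁ c₂ : C, F.map coprod.inr ≫ app c₁ c₂ = 0

theorem SplitMonoadditive.nonempty_fstRetraction {F : C ⥤ ModuleCat.{0} k}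
    (hF : SplitMonoadditive F) : Nonempty (FstRetraction F) := by
  obtain ⟨r, hr⟩ := hF
  -- `erw`: the target `biSum F` of `canNat F` is a biproduct only up to unfolding `biSum`
  have hinl : canNatFst F ≫ r ≫ biprod.fst = 𝟙 _ := by
    have := biprod.inl ≫= hr =≫ biprod.fst
    erw [canNat, Category.assoc, biprod.inl_desc_assoc, Category.id_comp, biprod.inl_fst] at this
    exact this
  have hinr : canNatSnd F ≫ r ≫ biprod.fst = 0 := by
    have := biprod.inr ≫= hr =≫ biprod.fst
    erw [canNat, Category.assoc, biprod.inr_desc_assoc, Category.id_comp, biprod.inr_fst] at this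
    exact this
  exact ⟨{
    app := fun c₁ c₂ => (r ≫ biprod.fst).app (c₁, c₂)
    naturality := fun f₁ f₂ => (r ≫ biprod.fst).naturality (X := (_, _)) (Y := (_, _)) (f₁, f₂)
    map_inl_comp := fun c₁ c₂ => NatTrans.congr_app hinl (c₁, c₂)
    map_inr_comp := fun c₁ c₂ => NatTrans.congr_app hinr (c₁, c₂) }⟩

namespace FstRetraction

variable {F : C ⥤ ModuleCat.{0} k} (P : FstRetraction F)

noncomputable def sndApp (c₁ c₂ : C) : F.obj (c₁ ⨿ c₂) ⟶ F.obj c₂ :=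
  F.map (coprod.braiding c₁ c₂).hom ≫ P.app c₂ c₁

lemma sndApp_naturality {c₁ c₂ d₁ d₂ : C} (f₁ : c₁ ⟶ d₁) (f₂ : c₂ ⟶ d₂) :
    F.map (coprod.map f₁ f₂) ≫ P.sndApp d₁ d₂ = P.sndApp c₁ c₂ ≫ F.map f₂ := by
  have braiding_naturality : coprod.map f₁ f₂ ≫ (coprod.braiding d₁ d₂).hom =
      (coprod.braiding c₁ c₂).hom ≫ coprod.map f₂ f₁ := by
    ext <;> simp
  rw [sndApp, sndApp, ← F.map_comp_assoc, braiding_naturality, F.map_comp_assoc, P.naturality,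
    Category.assoc]

lemma map_inl_comp_sndApp (c₁ c₂ : C) : F.map coprod.inl ≫ P.sndApp c₁ c₂ = 0 := by
  rw [sndApp, ← F.map_comp_assoc, coprod.braiding_hom, coprod.inl_desc, P.map_inr_comp]

lemma map_inr_comp_sndApp (c₁ c₂ : C) : F.map coprod.inr ≫ P.sndApp c₁ c₂ = 𝟙 _ := by
  rw [sndApp, ← F.map_comp_assoc, coprod.braiding_hom, coprod.inr_desc, P.map_inl_comp]

noncomputable def fstNat : coprodF ⋙ F ⟶ CategoryTheory.Prod.fst C C ⋙ F where
  app p := P.app p.1 p.2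
  naturality _ _ f := P.naturality f.1 f.2

noncomputable def sndNat : coprodF ⋙ F ⟶ CategoryTheory.Prod.snd C C ⋙ F where
  app p := P.sndApp p.1 p.2
  naturality _ _ f := P.sndApp_naturality f.1 f.2

theorem splitMonoadditive (P : FstRetraction F) : SplitMonoadditive F :=
  ⟨biprod.lift P.fstNat P.sndNat, biprod.desc_comp_lift_eq_id
    (by ext p : 2; exact P.map_inl_comp p.1 p.2) (by ext p : 2; exact P.map_inr_comp p.1 p.2)
    (by ext p : 2; exact P.map_inl_comp_sndApp p.1 p.2)
    (by ext p : 2; exact P.map_inr_comp_sndApp p.1 p.2)⟩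

theorem monoadditive (P : FstRetraction F) : Monoadditive F := fun c₁ c₂ =>
  (IsSplitMono.mk' ⟨biprod.lift (P.app c₁ c₂) (P.sndApp c₁ c₂),
    biprod.desc_comp_lift_eq_id (P.map_inl_comp c₁ c₂) (P.map_inr_comp c₁ c₂)
      (P.map_inl_comp_sndApp c₁ c₂) (P.map_inr_comp_sndApp c₁ c₂)⟩).mono

noncomputable def sigmaLift (c₁ c₂ : C) : F.obj ((c₁ ⨿ c₂) ⨿ (c₁ ⨿ c₂)) ⟶ (SigmaF F).obj c₁ :=
  F.map (coprodInterchange c₁ c₂) ≫ P.app (c₁ ⨿ c₁) (c₂ ⨿ c₂) ≫ sigmaπ F c₁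

lemma map_inl_comp_sigmaLift (c₁ c₂ : C) : F.map coprod.inl ≫ P.sigmaLift c₁ c₂ = 0 := by
  rw [sigmaLift, ← F.map_comp_assoc, inl_coprodInterchange, reassoc_of% P.naturality,
    map_inl_comp_sigmaπ, comp_zero]

lemma map_inr_comp_sigmaLift (c₁ c₂ : C) : F.map coprod.inr ≫ P.sigmaLift c₁ c₂ = 0 := by
  rw [sigmaLift, ← F.map_comp_assoc, inr_coprodInterchange, reassoc_of% P.naturality,
    map_inr_comp_sigmaπ, comp_zero]

noncomputable def sigma : FstRetraction (SigmaF F) where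
  app c₁ c₂ := sigmaDesc F (P.sigmaLift c₁ c₂) (P.map_inl_comp_sigmaLift c₁ c₂)
    (P.map_inr_comp_sigmaLift c₁ c₂)
  naturality {c₁ c₂ _ _} f₁ f₂ := by
    rw [← cancel_epi (sigmaπ F (c₁ ⨿ c₂)), ← reassoc_of% sigmaπ_naturality,
      sigmaπ_comp_sigmaDesc, reassoc_of% sigmaπ_comp_sigmaDesc, sigmaLift, sigmaLift,
      ← F.map_comp_assoc, coprodInterchange_naturality, F.map_comp_assoc,
      reassoc_of% P.naturality, sigmaπ_naturality, Category.assoc, Category.assoc]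
  map_inl_comp c₁ c₂ := by
    rw [← cancel_epi (sigmaπ F c₁), ← reassoc_of% sigmaπ_naturality, sigmaπ_comp_sigmaDesc,
      sigmaLift, ← F.map_comp_assoc, coprod_map_inl_inl_coprodInterchange,
      reassoc_of% P.map_inl_comp, Category.comp_id]
  map_inr_comp c₁ c₂ := by
    rw [← cancel_epi (sigmaπ F c₂), ← reassoc_of% sigmaπ_naturality, sigmaπ_comp_sigmaDesc,
      sigmaLift, ← F.map_comp_assoc, coprod_map_inr_inr_coprodInterchange,
      reassoc_of% P.map_inr_comp, zero_comp, comp_zero]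

theorem nMonoadditive (P : FstRetraction F) (n : ℕ) : NMonoadditive n F := by
  induction n generalizing F with
  | zero => trivial
  | succ n ih => exact ⟨P.monoadditive, ih P.sigma⟩

end FstRetraction

end Stmt9

open Stmt9 in
/-- If `𝓕 : 𝒞 ⥤ Mod(k)` is a split monoadditive representation of a small
category with pairwise coproducts, then `Σ𝓕` is again split monoadditive; consequently every
split monoadditive representation is `∞`-monoadditive. -/
theorem splitMonoadditive_sigma_and_infty_monoadditive
    (k : Type) [CommRing k] (C : Type) [SmallCategory C] [HasBinaryCoproducts C]
    (F : C ⥤ ModuleCat.{0} k) (hF : SplitMonoadditive F) :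
    SplitMonoadditive (SigmaF F) ∧ ∀ n : ℕ, NMonoadditive n F := by
  obtain ⟨P⟩ := hF.nonempty_fstRetraction
  exact ⟨P.sigma.splitMonoadditive, P.nMonoadditive⟩
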